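/- arXiv:2604.20106 — 2 statements merged into one kernel-verified Lean document; each statement's English description precedes it below -/
import Mathlib

section
/- Let S be a dense subsemigroup of ((0,∞),+) and let A ⊆ S. Then A is an IP-set near zero if and only if there is an ultrafilter p on S with p + p = p and p ∈ 0⁺(S) such that A ∈ p. (Theorem 2.6, Hindman–Leader.) -/
/-- `S` is a dense subsemigroup of `((0,∞),+)`. -/
def IsDenseSubsemigroup (S : Set ℝ) : Prop :=
  (∀ x ∈ S, (0:ℝ) < x) ∧ (Set.Ioi (0:ℝ) ⊆ closure S) ∧ (∀ x ∈ S, ∀ y ∈ S, x + y ∈ S)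

def IPNearZero (S A : Set ℝ) : Prop :=
  ∃ x : ℕ → ℝ, (∀ n, x n ∈ S) ∧ Summable x ∧
    ∀ F : Finset ℕ, F.Nonempty → (∑ n ∈ F, x n) ∈ A

def zeroPlus (S : Set ℝ) : Set (Ultrafilter ℝ) :=
  {p | ∀ ε > (0:ℝ), {x | x ∈ S ∧ x < ε} ∈ p}

def uAdd (p q : Ultrafilter ℝ) : Ultrafilter ℝ :=
  p.bind fun x => q.map fun y => x + y


/-!
If `x` is summable with all finite sums in `A`, Hindman's compactness argument gives an idempotent
`p` containing `FS x`. Such a `p` lives on the bounded set `[0, ∑ xₙ]`, so it converges to some `c`;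
since addition of ultrafilters is compatible with limits, `p + p = p` forces `c + c = c`, i.e.
`c = 0`, hence `p ∈ 0⁺(S)`. Conversely, an idempotent `p ∈ 0⁺(S)` contains `A ∩ (0, 1)`, which
then contains an FS-set; a positive sequence whose finite sums stay below `1` is summable.
-/

open Filter Topology Hindman

attribute [local instance] Ultrafilter.add Ultrafilter.addSemigroup

namespace Hindman

theorem exists_finsetSum_eq_of_mem_FS {M : Type*} [AddCommMonoid M] {a : Stream' M} {m : M}
    (hm : m ∈ FS a) : ∃ s : Finset ℕ, s.Nonempty ∧ ∑ i ∈ s, a.get i = m := by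
  induction hm with
  | head' a => exact ⟨{0}, Finset.singleton_nonempty 0, by simp [Stream'.head]⟩
  | tail' a m _ ih =>
    obtain ⟨s, hs, rfl⟩ := ih
    exact ⟨s.map (addRightEmbedding 1), hs.map, by simp [Stream'.get_tail]⟩
  | cons' a m _ ih =>
    obtain ⟨s, hs, rfl⟩ := ih
    refine ⟨insert 0 (s.map (addRightEmbedding 1)), Finset.insert_nonempty _ _, ?_⟩
    rw [Finset.sum_insert (by simp)]
    simp [Stream'.get_tail, Stream'.head]

theorem FS_subset_Icc_tsum {a : Stream' ℝ} (ha : ∀ n, 0 ≤ a.get n) (hsum : Summable a.get) :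
    FS a ⊆ Set.Icc 0 (∑' n, a.get n) := by
  intro m hm
  obtain ⟨s, -, rfl⟩ := exists_finsetSum_eq_of_mem_FS hm
  exact ⟨Finset.sum_nonneg fun n _ => ha n, hsum.sum_le_tsum s fun n _ => ha n⟩

end Hindman

namespace Ultrafilter

variable {M : Type*} [TopologicalSpace M]

theorem add_le_nhds_add [Add M] [ContinuousAdd M] {U V : Ultrafilter M} {a b : M}
    (hU : (U : Filter M) ≤ 𝓝 a) (hV : (V : Filter M) ≤ 𝓝 b) :
    ((U + V : Ultrafilter M) : Filter M) ≤ 𝓝 (a + b) := fun _ hs =>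
  ((continuous_add.tendsto (a, b)).eventually hs).curry_nhds.filter_mono hU
    |>.mono fun _ h => h.filter_mono hV

theorem le_nhds_zero_of_add_self_of_isCompact [AddLeftCancelMonoid M] [ContinuousAdd M]
    [T2Space M] {U : Ultrafilter M} (hU : U + U = U) {K : Set M} (hK : IsCompact K)
    (hKU : K ∈ U) : (U : Filter M) ≤ 𝓝 0 := by
  obtain ⟨c, -, hc⟩ := hK.ultrafilter_le_nhds U (le_principal_iff.mpr hKU)
  have hcc : (U : Filter M) ≤ 𝓝 (c + c) := hU ▸ add_le_nhds_add hc hc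
  have hc_idem : c + c = c := tendsto_nhds_unique (f := id) hcc hc
  rwa [← add_eq_left.mp hc_idem]

end Ultrafilter

theorem mem_zeroPlus_of_le_nhds_zero {S : Set ℝ} {p : Ultrafilter ℝ} (hS : S ∈ p)
    (hp : (p : Filter ℝ) ≤ 𝓝 0) : p ∈ zeroPlus S := fun _ hε =>
  inter_mem hS (hp (Iio_mem_nhds hε))

/-- Theorem 2.6 (Hindman–Leader). -/
theorem IPNearZero_iff_mem_idempotent (S : Set ℝ) (hS : IsDenseSubsemigroup S)
    (A : Set ℝ) (hA : A ⊆ S) :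
    IPNearZero S A ↔
      ∃ p : Ultrafilter ℝ, uAdd p p = p ∧ p ∈ zeroPlus S ∧ A ∈ p := by
  constructor
  · rintro ⟨x, hxS, hsum, hxA⟩
    have hFS : FS x ⊆ A := fun m hm => by
      obtain ⟨s, hs, rfl⟩ := exists_finsetSum_eq_of_mem_FS hm
      exact hxA s hs
    obtain ⟨p, hp, hpFS⟩ := exists_idempotent_ultrafilter_le_FS x
    have hp0 : (p : Filter ℝ) ≤ 𝓝 0 := p.le_nhds_zero_of_add_self_of_isCompact hp isCompact_Icc
      (mem_of_superset hpFS (FS_subset_Icc_tsum (fun n => (hS.1 _ (hxS n)).le) hsum))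
    exact ⟨p, hp, mem_zeroPlus_of_le_nhds_zero (mem_of_superset hpFS (hFS.trans hA)) hp0,
      mem_of_superset hpFS hFS⟩
  · rintro ⟨p, hp, hp0, hAp⟩
    obtain ⟨a, ha⟩ := exists_FS_of_large p hp _ (inter_mem hAp (hp0 1 one_pos))
    have haS : ∀ n, a.get n ∈ S := fun n => (ha (FS.singleton a n)).2.1
    refine ⟨a.get, haS, ?_, fun s hs => (ha (FS.finsetSum a s hs)).1⟩
    refine summable_of_sum_le (c := 1) (fun n => (hS.1 _ (haS n)).le) fun s => ?_
    rcases s.eq_empty_or_nonempty with rfl | hs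
    · simp
    · exact (ha (FS.finsetSum a s hs)).2.2.le
end

section
/- Let S be a dense subsemigroup of ((0,∞),+). Then there exists an ultrafilter p on S such that p + p = p and for every ε > 0, the set {x ∈ S : x < ε} belongs to p; that is, 0⁺(S) contains an additive idempotent ultrafilter. -/
/-!
`0⁺(S)` is a nonempty closed subset of the compact right-topological semigroup `(βℝ, +)`,
nonempty because `0` lies in the closure of `S`, and closed under `+` because `S` is. The
Ellis–Numakura lemma then yields an idempotent in it.
-/

open Filter Topology

attribute [local instance] Ultrafilter.add Ultrafilter.addSemigroup

lemma uAdd_eq_add (p q : Ultrafilter ℝ) : uAdd p q = p + q := by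
  ext A
  exact (Ultrafilter.eventually_add p q (· ∈ A)).symm

lemma isClosed_zeroPlus (S : Set ℝ) : IsClosed (zeroPlus S) := by
  have : zeroPlus S = ⋂ ε ∈ Set.Ioi (0:ℝ), {p : Ultrafilter ℝ | {x | x ∈ S ∧ x < ε} ∈ p} := by
    ext p; simp [zeroPlus]
  rw [this]
  exact isClosed_biInter fun ε _ => ultrafilter_isClosed_basic _

lemma zeroPlus_nonempty {S : Set ℝ} (h0 : (0:ℝ) ∈ closure S) : (zeroPlus S).Nonempty := by
  have : (𝓝[S] (0:ℝ)).NeBot := mem_closure_iff_clusterPt.mp h0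
  obtain ⟨q, hq⟩ := Ultrafilter.exists_le (𝓝[S] (0:ℝ))
  refine ⟨q, fun ε hε => hq ?_⟩
  filter_upwards [nhdsWithin_le_nhds (Iio_mem_nhds hε), self_mem_nhdsWithin] with x hxε hxS
  exact ⟨hxS, hxε⟩

lemma add_mem_zeroPlus {S : Set ℝ} (hadd : ∀ x ∈ S, ∀ y ∈ S, x + y ∈ S) {p q : Ultrafilter ℝ}
    (hp : p ∈ zeroPlus S) (hq : q ∈ zeroPlus S) : p + q ∈ zeroPlus S := by
  intro ε hε
  change ∀ᶠ z in (p + q : Ultrafilter ℝ), z ∈ S ∧ z < ε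
  rw [Ultrafilter.eventually_add]
  filter_upwards [hp _ (half_pos hε)] with x hx
  filter_upwards [hq _ (half_pos hε)] with y hy
  exact ⟨hadd x hx.1 y hy.1, by linarith [hx.2, hy.2]⟩

/-- `0⁺(S)` contains an additive idempotent ultrafilter. -/
theorem exists_idempotent_zeroPlus (S : Set ℝ) (hS : IsDenseSubsemigroup S) :
    ∃ p : Ultrafilter ℝ, uAdd p p = p ∧ p ∈ zeroPlus S := by
  obtain ⟨-, hdense, hadd⟩ := hS
  have h0 : (0:ℝ) ∈ closure S :=
    closure_minimal hdense isClosed_closure (by simp [closure_Ioi])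
  obtain ⟨p, hp, hpp⟩ := exists_idempotent_in_compact_add_subsemigroup
    Ultrafilter.continuous_add_left (zeroPlus S) (zeroPlus_nonempty h0)
    (isClosed_zeroPlus S).isCompact fun p hp q hq => add_mem_zeroPlus hadd hp hq
  exact ⟨p, by rw [uAdd_eq_add, hpp], hp⟩
end
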